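/- arXiv:2312.07673 — 2 statements merged into one kernel-verified Lean document; each statement's English description precedes it below -/
import Mathlib

section
/- Let ĝ, g̃, g ∈ ℝⁿ with ‖ĝ − g̃‖ ≤ u‖ĝ‖, ‖g̃‖ ≥ (1−u)‖ĝ‖ > 0, ‖g − ĝ‖ ≤ ω‖ĝ‖, let ϑ be real with |ϑ| ≤ γ < 1, σ > 0, ŝ = −g̃/σ, and ΔT̂ = (‖g̃‖²/σ)(1+ϑ) > 0. Then |g̃ᵀŝ(1+ϑ) − gᵀŝ| / ΔT̂ ≤ (u + γα + αω)/(1−u), where α = 1/(1−γ). -/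
/-!
Expanding `ŝ = -σ⁻¹ g̃` turns the numerator into `σ⁻¹ (⟪g - g̃, g̃⟫ - ϑ ‖g̃‖²)`, so by Cauchy–Schwarz
and `1 + ϑ ≥ 1 - γ` the quotient is at most `(‖g - g̃‖ / ‖g̃‖ + γ) / (1 - γ)`. The triangle inequality
through `ĝ` and `‖g̃‖ ≥ (1 - u) ‖ĝ‖` bound the relative error `‖g - g̃‖ / ‖g̃‖` by `(ω + u) / (1 - u)`,
and the claimed constant is exactly `((ω + u) / (1 - u) + γ) / (1 - γ)`.
-/

lemma norm_sub_div_norm_le_of_rel_error {E : Type*} [SeminormedAddCommGroup E] {g gt ĝ : E}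
    {u ω : ℝ} (hu0 : 0 ≤ u) (hu1 : u < 1) (hω : 0 ≤ ω) (hgt : ‖ĝ - gt‖ ≤ u * ‖ĝ‖)
    (hgt_norm : (1 - u) * ‖ĝ‖ ≤ ‖gt‖) (hg : ‖g - ĝ‖ ≤ ω * ‖ĝ‖) :
    ‖g - gt‖ / ‖gt‖ ≤ (ω + u) / (1 - u) := by
  have hu' : 0 < 1 - u := by linarith
  rcases (norm_nonneg gt).eq_or_lt with hc | hc
  · rw [← hc, div_zero]
    positivity
  rw [div_le_div_iff₀ hc hu']
  calc ‖g - gt‖ * (1 - u) ≤ (ω * ‖ĝ‖ + u * ‖ĝ‖) * (1 - u) := by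
        gcongr
        exact (norm_sub_le_norm_sub_add_norm_sub g ĝ gt).trans (add_le_add hg hgt)
    _ = (ω + u) * ((1 - u) * ‖ĝ‖) := by ring
    _ ≤ (ω + u) * ‖gt‖ := by gcongr

open scoped InnerProductSpace

section InnerProductSpace

variable {E : Type*} [NormedAddCommGroup E] [InnerProductSpace ℝ E]

lemma inner_neg_smul_model_error_eq (g gt : E) (σ ϑ : ℝ) :
    ⟪gt, -(σ⁻¹ • gt)⟫_ℝ * (1 + ϑ) - ⟪g, -(σ⁻¹ • gt)⟫_ℝ =
      σ⁻¹ * (⟪g - gt, gt⟫_ℝ - ϑ * ‖gt‖ ^ 2) := by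
  simp only [inner_neg_right, real_inner_smul_right, inner_sub_left, real_inner_self_eq_norm_sq]
  ring

lemma abs_inner_sub_mul_norm_sq_le (g gt : E) (ϑ : ℝ) :
    |⟪g - gt, gt⟫_ℝ - ϑ * ‖gt‖ ^ 2| ≤ ‖g - gt‖ * ‖gt‖ + |ϑ| * ‖gt‖ ^ 2 :=
  calc |⟪g - gt, gt⟫_ℝ - ϑ * ‖gt‖ ^ 2| ≤ |⟪g - gt, gt⟫_ℝ| + |ϑ * ‖gt‖ ^ 2| := abs_sub _ _
    _ = |⟪g - gt, gt⟫_ℝ| + |ϑ| * ‖gt‖ ^ 2 := by rw [abs_mul, abs_of_nonneg (sq_nonneg ‖gt‖)]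
    _ ≤ ‖g - gt‖ * ‖gt‖ + |ϑ| * ‖gt‖ ^ 2 := by gcongr; exact abs_real_inner_le_norm _ _

lemma abs_inner_neg_smul_model_error_div_le (g gt : E) {σ ϑ γ : ℝ} (hσ : 0 < σ)
    (hϑ : |ϑ| ≤ γ) (hγ : γ < 1) :
    |⟪gt, -(σ⁻¹ • gt)⟫_ℝ * (1 + ϑ) - ⟪g, -(σ⁻¹ • gt)⟫_ℝ| / (‖gt‖ ^ 2 / σ * (1 + ϑ)) ≤
      (‖g - gt‖ / ‖gt‖ + γ) / (1 - γ) := by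
  have hγ0 : 0 ≤ γ := (abs_nonneg ϑ).trans hϑ
  have hγ' : 0 < 1 - γ := by linarith
  rcases eq_or_ne gt 0 with rfl | hgt
  · simp only [norm_zero, zero_pow two_ne_zero, zero_div, zero_mul, div_zero]
    positivity
  have hc : 0 < ‖gt‖ := norm_pos_iff.2 hgt
  have hϑγ : 1 - γ ≤ 1 + ϑ := by linarith [neg_abs_le ϑ]
  calc |⟪gt, -(σ⁻¹ • gt)⟫_ℝ * (1 + ϑ) - ⟪g, -(σ⁻¹ • gt)⟫_ℝ| / (‖gt‖ ^ 2 / σ * (1 + ϑ))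
        = |⟪g - gt, gt⟫_ℝ - ϑ * ‖gt‖ ^ 2| / (‖gt‖ ^ 2 * (1 + ϑ)) := by
          rw [inner_neg_smul_model_error_eq, abs_mul, abs_inv, abs_of_pos hσ]
          field_simp
    _ ≤ (‖g - gt‖ * ‖gt‖ + γ * ‖gt‖ ^ 2) / (‖gt‖ ^ 2 * (1 - γ)) := by
          gcongr
          exact (abs_inner_sub_mul_norm_sq_le g gt ϑ).trans (by gcongr)
    _ = (‖g - gt‖ / ‖gt‖ + γ) / (1 - γ) := by field_simp

end InnerProductSpace

theorem stmt_11_general (n : ℕ) (ghat gtil g : EuclideanSpace ℝ (Fin n))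
    (u ω γ ϑ σ ΔT : ℝ)
    (hu0 : 0 ≤ u) (hu1 : u < 1) (hω : 0 ≤ ω) (hγ1 : γ < 1)
    (hϑ : |ϑ| ≤ γ) (hσ : 0 < σ)
    (h1 : ‖ghat - gtil‖ ≤ u * ‖ghat‖)
    (h2 : ‖gtil‖ ≥ (1 - u) * ‖ghat‖)
    (h4 : ‖g - ghat‖ ≤ ω * ‖ghat‖)
    (shat : EuclideanSpace ℝ (Fin n)) (hshat : shat = -(σ⁻¹ • gtil))
    (hΔT : ΔT = ‖gtil‖^2 / σ * (1 + ϑ)) :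
    |(inner ℝ gtil shat : ℝ) * (1 + ϑ) - (inner ℝ g shat : ℝ)| / ΔT ≤
      (u + γ * (1 / (1 - γ)) + (1 / (1 - γ)) * ω) / (1 - u) := by
  subst hshat hΔT
  have hγ' : 0 < 1 - γ := by linarith
  have hu' : 0 < 1 - u := by linarith
  calc _ ≤ (‖g - gtil‖ / ‖gtil‖ + γ) / (1 - γ) :=
        abs_inner_neg_smul_model_error_div_le g gtil hσ hϑ hγ1
    _ ≤ ((ω + u) / (1 - u) + γ) / (1 - γ) := by
        gcongr (?_ + γ) / (1 - γ)
        exact norm_sub_div_norm_le_of_rel_error hu0 hu1 hω h1 h2 h4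
    _ = _ := by field_simp; ring

theorem stmt_11 (n : ℕ) (ghat gtil g : EuclideanSpace ℝ (Fin n))
    (u ω γ ϑ σ ΔT : ℝ)
    (hu0 : 0 ≤ u) (hu1 : u < 1) (hω : 0 ≤ ω) (hγ0 : 0 ≤ γ) (hγ1 : γ < 1)
    (hϑ : |ϑ| ≤ γ) (hσ : 0 < σ)
    (h1 : ‖ghat - gtil‖ ≤ u * ‖ghat‖)
    (h2 : ‖gtil‖ ≥ (1 - u) * ‖ghat‖) (h3 : 0 < ‖ghat‖)
    (h4 : ‖g - ghat‖ ≤ ω * ‖ghat‖)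
    (shat : EuclideanSpace ℝ (Fin n)) (hshat : shat = -(σ⁻¹ • gtil))
    (hΔT : ΔT = ‖gtil‖^2 / σ * (1 + ϑ)) (hΔTpos : 0 < ΔT) :
    |(inner ℝ gtil shat : ℝ) * (1 + ϑ) - (inner ℝ g shat : ℝ)| / ΔT ≤
      (u + γ * (1 / (1 - γ)) + (1 / (1 - γ)) * ω) / (1 - u) :=
  stmt_11_general n ghat gtil g u ω γ ϑ σ ΔT hu0 hu1 hω hγ1 hϑ hσ h1 h2 h4 shat hshat hΔT
end

section
/- Suppose a positive sequence (σₖ) satisfies: σ_{k+1} ≥ γ₁σₖ when iteration k is successful and σ_{k+1} ≥ γ₂σₖ when unsuccessful, with 0 < γ₁ < 1 < γ₂, and σₖ ≤ σ_max for all k ≤ K with σ₀ > 0. Let S be the number of successful iterations among 0,…,K−1 and U = K − S the number of unsuccessful ones. Then K ≤ S(1 + |log γ₁|/log γ₂) + (1/log γ₂)·log(σ_max/σ₀). -/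
/-! Along the run every successful iteration multiplies σ by at least γ₁ and every unsuccessful
one by at least γ₂, so `σ₀ γ₁^S γ₂^U ≤ σ_K ≤ σ_max`. Taking logarithms gives
`U log γ₂ ≤ log (σ_max / σ₀) + S |log γ₁|`, and `K = S + U`. -/

open Finset

lemma mul_prod_range_le_of_mul_le_succ {σ c : ℕ → ℝ} {n : ℕ} (hc : ∀ k < n, 0 ≤ c k)
    (h : ∀ k < n, c k * σ k ≤ σ (k + 1)) :
    σ 0 * ∏ k ∈ range n, c k ≤ σ n := by
  induction n with
  | zero => simp
  | succ n ih =>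
    calc σ 0 * ∏ k ∈ range (n + 1), c k = c n * (σ 0 * ∏ k ∈ range n, c k) := by
          rw [prod_range_succ]; ring
      _ ≤ c n * σ n := by
          gcongr
          · exact hc n n.lt_succ_self
          · exact ih (fun k hk => hc k (by omega)) (fun k hk => h k (by omega))
      _ ≤ σ (n + 1) := h n n.lt_succ_self

lemma Finset.prod_ite_const {ι M : Type*} [CommMonoid M] (s : Finset ι) (p : ι → Prop)
    [DecidablePred p] (a b : M) :
    ∏ i ∈ s, (if p i then a else b) = a ^ #(s.filter p) * b ^ #(s.filter (¬p ·)) := by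
  rw [prod_ite, prod_const, prod_const]

lemma natCast_add_le_of_mul_pow_mul_pow_le {γ₁ γ₂ σ₀ σmax : ℝ} (hγ₁ : 0 < γ₁) (hγ₂ : 1 < γ₂)
    (hσ₀ : 0 < σ₀) {S U : ℕ} (h : σ₀ * γ₁ ^ S * γ₂ ^ U ≤ σmax) :
    ((S + U : ℕ) : ℝ) ≤ S * (1 + |Real.log γ₁| / Real.log γ₂) +
      (1 / Real.log γ₂) * Real.log (σmax / σ₀) := by
  have hlog₂ : 0 < Real.log γ₂ := Real.log_pos hγ₂
  have hratio : γ₁ ^ S * γ₂ ^ U ≤ σmax / σ₀ := by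
    rw [le_div_iff₀ hσ₀]; linarith
  have hlog : S * Real.log γ₁ + U * Real.log γ₂ ≤ Real.log (σmax / σ₀) := by
    have := Real.log_le_log (by positivity) hratio
    rwa [Real.log_mul (by positivity) (by positivity), Real.log_pow, Real.log_pow] at this
  have hU : (U : ℝ) ≤ (Real.log (σmax / σ₀) + S * |Real.log γ₁|) / Real.log γ₂ := by
    rw [le_div_iff₀ hlog₂]
    nlinarith [neg_le_abs (Real.log γ₁), (Nat.cast_nonneg S : (0 : ℝ) ≤ S)]
  calc ((S + U : ℕ) : ℝ) = S + U := by push_cast; ring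
    _ ≤ S + (Real.log (σmax / σ₀) + S * |Real.log γ₁|) / Real.log γ₂ := by linarith
    _ = _ := by ring

theorem stmt_13_general (K : ℕ) (σ : ℕ → ℝ) (succ : ℕ → Prop) [DecidablePred succ]
    (γ₁ γ₂ σmax : ℝ)
    (hγ₁0 : 0 < γ₁) (hγ₂ : 1 < γ₂)
    (hσpos : ∀ k ≤ K, 0 < σ k)
    (hsucc : ∀ k < K, succ k → σ (k + 1) ≥ γ₁ * σ k)
    (hfail : ∀ k < K, ¬ succ k → σ (k + 1) ≥ γ₂ * σ k)
    (hmax : ∀ k ≤ K, σ k ≤ σmax) :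
    (K : ℝ) ≤ ((Finset.range K).filter succ).card *
        (1 + |Real.log γ₁| / Real.log γ₂) +
      (1 / Real.log γ₂) * Real.log (σmax / σ 0) := by
  have hgrowth := mul_prod_range_le_of_mul_le_succ (σ := σ) (n := K)
    (c := fun k => if succ k then γ₁ else γ₂)
    (fun k _ => by split_ifs <;> positivity)
    (fun k hk => by split_ifs with hs; exacts [hsucc k hk hs, hfail k hk hs])
  rw [prod_ite_const, ← mul_assoc] at hgrowth
  have hcount := natCast_add_le_of_mul_pow_mul_pow_le hγ₁0 hγ₂ (hσpos 0 K.zero_le)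
    (hgrowth.trans (hmax K le_rfl))
  rwa [card_filter_add_card_filter_not, card_range] at hcount

theorem stmt_13 (K : ℕ) (σ : ℕ → ℝ) (succ : ℕ → Prop) [DecidablePred succ]
    (γ₁ γ₂ σmax : ℝ)
    (hγ₁0 : 0 < γ₁) (hγ₁1 : γ₁ < 1) (hγ₂ : 1 < γ₂)
    (hσpos : ∀ k ≤ K, 0 < σ k)
    (hsucc : ∀ k < K, succ k → σ (k + 1) ≥ γ₁ * σ k)
    (hfail : ∀ k < K, ¬ succ k → σ (k + 1) ≥ γ₂ * σ k)
    (hmax : ∀ k ≤ K, σ k ≤ σmax) :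
    (K : ℝ) ≤ ((Finset.range K).filter succ).card *
        (1 + |Real.log γ₁| / Real.log γ₂) +
      (1 / Real.log γ₂) * Real.log (σmax / σ 0) :=
  stmt_13_general K σ succ γ₁ γ₂ σmax hγ₁0 hγ₂ hσpos hsucc hfail hmax
end
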